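/- Let ρ: ℝ → ℝ be convex, symmetric, with ρ(0) = 0 and ρ(x) > 0 for x ≠ 0, let λ > 0 and 1 ≤ h ≤ n. Let Z̃ = Z_{γ,τ} be a sample of n observations in which at least m = n − h + 1 observations equal the point z(γ, τ) = ((τ, 0, …, 0)', γτ) with γ, τ > 0. Then for every β = (β₁, …, β_p)' ∈ ℝ^p with ‖β‖₂ ≤ γ − 1, the objective Q_{Z̃}(β) = Σ_{i=1}^{h} (ρ(ỹ − X̃β))_{i:n} + h λ Σ_{j=1}^{p} |β_j| satisfies Q_{Z̃}(β) ≥ ρ(τ(γ − β₁)) ≥ ρ(τ). -/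

import Mathlib

open Finset

/-- The `i`-th order statistic of the vector `r`, i.e. the `i`-th entry after sorting
the entries of `r` in nondecreasing order. -/
noncomputable def orderStat {n : ℕ} (r : Fin n → ℝ) (i : Fin n) : ℝ :=
  r (Tuple.sort r i)

/-- The sum of the `h` smallest entries (order statistics) of the vector `r`. -/
noncomputable def trimmedSum {n : ℕ} (h : ℕ) (r : Fin n → ℝ) : ℝ :=
  ∑ i ∈ Finset.univ.filter (fun i : Fin n => (i : ℕ) < h), orderStat r i

/-- The L¹ norm of a coefficient vector `β ∈ ℝ^p`. -/
noncomputable def l1norm {p : ℕ} (β : Fin p → ℝ) : ℝ := ∑ j, |β j|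

/-- The Euclidean (L²) norm of a coefficient vector `β ∈ ℝ^p`. -/
noncomputable def euclNorm {p : ℕ} (β : Fin p → ℝ) : ℝ := Real.sqrt (∑ j, β j ^ 2)

/-- `Corrupt m X X' y y'` : the sample `(X', y')` is obtained from the sample `(X, y)` by
replacing (at most) `m` of the `n` observations `(xᵢ', yᵢ)` by arbitrary values. -/
def Corrupt {n p : ℕ} (m : ℕ) (X X' : Fin n → Fin p → ℝ) (y y' : Fin n → ℝ) : Prop :=
  ∃ s : Finset (Fin n), s.card ≤ m ∧ ∀ i ∉ s, (∀ j, X' i j = X i j) ∧ y' i = y i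

/-- The trimmed penalized objective function
`Q_Z̃(β) = Σ_{i=1}^{h} (ρ(ỹ − X̃β))_{i:n} + h λ Σ_j |β_j|` with loss `ρ`. -/
noncomputable def QGen {n p : ℕ} (ρ : ℝ → ℝ) (lam : ℝ) (h : ℕ)
    (X : Fin n → Fin p → ℝ) (y : Fin n → ℝ) (β : Fin p → ℝ) : ℝ :=
  trimmedSum h (fun i => ρ (y i - ∑ j, X i j * β j)) + (h : ℝ) * lam * l1norm β

/-
Whatever `β` is, at least one of the `h` smallest residual losses comes from a replaced
observation, by pigeonhole: `h` sorted positions and `n - h + 1` replaced ones cannot be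
disjoint among `n` indices. Such a loss is `ρ(γτ - τβ₁)`, and all other terms of `Q` are
nonnegative. Finally `β₁ ≤ ‖β‖₂ ≤ γ - 1` gives `τ ≤ τ(γ - β₁)`, and a convex even function
is nondecreasing in `|x|`.
-/

theorem ConvexOn.le_of_abs_le_of_even {ρ : ℝ → ℝ} (hconv : ConvexOn ℝ Set.univ ρ)
    (heven : Function.Even ρ) {a b : ℝ} (hab : |a| ≤ |b|) : ρ a ≤ ρ b := by
  have hseg : a ∈ segment ℝ (-|b|) |b| := by
    rw [segment_eq_Icc (by simp)]
    exact abs_le.mp hab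
  have := hconv.le_on_segment (Set.mem_univ _) (Set.mem_univ _) hseg
  rcases abs_choice b with hb | hb <;> simpa [hb, heven b] using this

theorem abs_le_euclNorm {p : ℕ} (β : Fin p → ℝ) (j : Fin p) : |β j| ≤ euclNorm β :=
  Real.abs_le_sqrt (Finset.single_le_sum (fun k _ => sq_nonneg (β k)) (Finset.mem_univ j))

theorem l1norm_nonneg {p : ℕ} (β : Fin p → ℝ) : 0 ≤ l1norm β :=
  Finset.sum_nonneg fun j _ => abs_nonneg (β j)

theorem sum_ite_val_eq_zero_mul {p : ℕ} (hp : 1 ≤ p) (τ : ℝ) (β : Fin p → ℝ) :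
    ∑ j : Fin p, (if (j : ℕ) = 0 then τ else 0) * β j = τ * β ⟨0, hp⟩ := by
  rw [Finset.sum_eq_single ⟨0, hp⟩ (fun j _ hj => by simp [Fin.ext_iff.not.mp hj])
    (by simp)]
  rfl

theorem trimmedSum_eq_sum_map {n : ℕ} (h : ℕ) (r : Fin n → ℝ) :
    trimmedSum h r =
      ∑ i ∈ ({i : Fin n | i < h} : Finset (Fin n)).map (Tuple.sort r).toEmbedding, r i := by
  rw [Finset.sum_map]
  rfl

theorem le_trimmedSum_of_forall_mem_le {n : ℕ} {h : ℕ} {r : Fin n → ℝ} (hr : ∀ i, 0 ≤ r i)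
    {s : Finset (Fin n)} (hs : n - h < s.card) {c : ℝ} (hc : ∀ i ∈ s, c ≤ r i) :
    c ≤ trimmedSum h r := by
  set T := ({i : Fin n | i < h} : Finset (Fin n)).map (Tuple.sort r).toEmbedding
  obtain ⟨i, hiT, his⟩ : ∃ i ∈ T, i ∈ s := by
    by_contra! hdisj
    have hunion := Finset.card_union_of_disjoint (Finset.disjoint_left.mpr hdisj)
    have hle := Finset.card_le_univ (T ∪ s)
    have hT : T.card = min n h := by rw [Finset.card_map, Fin.card_filter_val_lt]
    rw [Fintype.card_fin] at hle
    omega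
  rw [trimmedSum_eq_sum_map]
  exact (hc i his).trans (Finset.single_le_sum (fun j _ => hr j) hiT)

theorem objective_lower_bound_contaminated_general
    {n p h : ℕ} (hp : 1 ≤ p)
    (ρ : ℝ → ℝ) (hconv : ConvexOn ℝ Set.univ ρ) (hsym : ∀ x : ℝ, ρ (-x) = ρ x)
    (hzero : ρ 0 = 0)
    (lam : ℝ) (hlam : 0 < lam)
    (X : Fin n → Fin p → ℝ) (y : Fin n → ℝ)
    (γ τ : ℝ) (hτ : 0 < τ)
    (hrep : ∃ s : Finset (Fin n), n - h + 1 ≤ s.card ∧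
      ∀ i ∈ s, (∀ j : Fin p, X i j = if (j : ℕ) = 0 then τ else 0) ∧ y i = γ * τ) :
    ∀ β : Fin p → ℝ, euclNorm β ≤ γ - 1 →
      ρ (τ * (γ - β ⟨0, hp⟩)) ≤ QGen ρ lam h X y β ∧
      ρ τ ≤ ρ (τ * (γ - β ⟨0, hp⟩)) := by
  obtain ⟨s, hscard, hs⟩ := hrep
  intro β hβ
  set j₀ : Fin p := ⟨0, hp⟩
  have hρ_nonneg (x : ℝ) : 0 ≤ ρ x := hzero ▸ hconv.le_of_abs_le_of_even hsym (by simp)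
  have hloss (i) (hi : i ∈ s) : ρ (y i - ∑ j, X i j * β j) = ρ (τ * (γ - β j₀)) := by
    simp only [(hs i hi).1, sum_ite_val_eq_zero_mul hp, (hs i hi).2]
    rw [mul_sub, mul_comm γ]
  have htrim := le_trimmedSum_of_forall_mem_le (h := h) (fun i => hρ_nonneg _) hscard
    (fun i hi => (hloss i hi).ge)
  have hpen : 0 ≤ (h : ℝ) * lam * l1norm β := by
    have := l1norm_nonneg β
    positivity
  refine ⟨by unfold QGen; linarith, hconv.le_of_abs_le_of_even hsym ?_⟩
  have hgap : 1 ≤ γ - β j₀ := by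
    linarith [(le_abs_self (β j₀)).trans ((abs_le_euclNorm β j₀).trans hβ)]
  rw [abs_of_pos hτ, abs_of_pos (mul_pos hτ (by linarith))]
  exact le_mul_of_one_le_right hτ.le hgap

/-- Inequality (A.3) of the paper: if at least `m = n − h + 1` observations of the sample
`Z̃ = (X̃, ỹ)` equal the point `z(γ, τ) = ((τ, 0, …, 0)', γτ)` with `γ, τ > 0`, then for
every `β` with `‖β‖₂ ≤ γ − 1` the trimmed penalized objective satisfies
`Q_Z̃(β) ≥ ρ(τ(γ − β₁)) ≥ ρ(τ)`. -/
theorem objective_lower_bound_contaminated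
    {n p h : ℕ} (hp : 1 ≤ p) (hh1 : 1 ≤ h) (hhn : h ≤ n)
    (ρ : ℝ → ℝ) (hconv : ConvexOn ℝ Set.univ ρ) (hsym : ∀ x : ℝ, ρ (-x) = ρ x)
    (hzero : ρ 0 = 0) (hpos : ∀ x : ℝ, x ≠ 0 → 0 < ρ x)
    (lam : ℝ) (hlam : 0 < lam)
    (X : Fin n → Fin p → ℝ) (y : Fin n → ℝ)
    (γ τ : ℝ) (hγ : 0 < γ) (hτ : 0 < τ)
    (hrep : ∃ s : Finset (Fin n), n - h + 1 ≤ s.card ∧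
      ∀ i ∈ s, (∀ j : Fin p, X i j = if (j : ℕ) = 0 then τ else 0) ∧ y i = γ * τ) :
    ∀ β : Fin p → ℝ, euclNorm β ≤ γ - 1 →
      ρ (τ * (γ - β ⟨0, hp⟩)) ≤ QGen ρ lam h X y β ∧
      ρ τ ≤ ρ (τ * (γ - β ⟨0, hp⟩)) :=
  objective_lower_bound_contaminated_general hp ρ hconv hsym hzero lam hlam X y γ τ hτ hrep
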